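/- arXiv:2603.12405 — 3 statements merged into one kernel-verified Lean document; each statement's English description precedes it below -/
import Mathlib

section
/- The matrix U_d is unitary and satisfies (⟨0|⊗⟨0|⊗⟨0|⊗I_N) U_d (|0⟩⊗|0⟩⊗|0⟩⊗I_N) = L̃_d; that is, U_d is an exact (1, 3, 0)-block encoding of the scaled one-dimensional Dirichlet Laplacian L̃_d. -/
open Matrix
open scoped Kronecker

noncomputable section

instance instNeZeroPow2 (n : ℕ) : NeZero (2 ^ n) := ⟨pow_ne_zero n two_ne_zero⟩

/-- Cyclic left shift: `Sm • e_j = e_{j-1 mod N}`, i.e. `(Sm)_{i j} = [i = j - 1]`. -/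
def Sm (N : ℕ) [NeZero N] : Matrix (Fin N) (Fin N) ℂ :=
  Matrix.of fun i j => if i = j - 1 then 1 else 0

/-- Cyclic right shift: `Sp • e_j = e_{j+1 mod N}`. -/
def Sp (N : ℕ) [NeZero N] : Matrix (Fin N) (Fin N) ℂ :=
  Matrix.of fun i j => if i = j + 1 then 1 else 0

/-- The index `N - 1` of the last grid point. -/
def fLast (N : ℕ) [NeZero N] : Fin N := ⟨N - 1, Nat.sub_lt (Nat.pos_of_neZero N) Nat.one_pos⟩

def Hgate : Matrix (Fin 2) (Fin 2) ℂ := ((1 / Real.sqrt 2 : ℝ) : ℂ) • !![1, 1; 1, -1]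
def Zgate : Matrix (Fin 2) (Fin 2) ℂ := !![1, 0; 0, -1]
def Xgate : Matrix (Fin 2) (Fin 2) ℂ := !![0, 1; 1, 0]
def P0 : Matrix (Fin 2) (Fin 2) ℂ := !![1, 0; 0, 0]
def P1 : Matrix (Fin 2) (Fin 2) ℂ := !![0, 0; 0, 1]

/-- Controlled flip `F(Q) = X ⊗ Q + I₂ ⊗ (I − Q)` for a projector `Q`. -/
def Fctrl {α : Type*} [DecidableEq α] [Fintype α] (Q : Matrix α α ℂ) :
    Matrix (Fin 2 × α) (Fin 2 × α) ℂ :=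
  Xgate ⊗ₖ Q + (1 : Matrix (Fin 2) (Fin 2) ℂ) ⊗ₖ ((1 : Matrix α α ℂ) - Q)

/-- `C₋ = I₂ ⊗ (|0⟩⟨0| ⊗ I₂ ⊗ S⁻ + |1⟩⟨1| ⊗ I₂ ⊗ I_N)` on `del, ℓ₁, ℓ₀, j`. -/
def Cminus3 (N : ℕ) [NeZero N] :
    Matrix (Fin 2 × Fin 2 × Fin 2 × Fin N) (Fin 2 × Fin 2 × Fin 2 × Fin N) ℂ :=
  (1 : Matrix (Fin 2) (Fin 2) ℂ) ⊗ₖ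
    (P0 ⊗ₖ ((1 : Matrix (Fin 2) (Fin 2) ℂ) ⊗ₖ Sm N) +
     P1 ⊗ₖ ((1 : Matrix (Fin 2) (Fin 2) ℂ) ⊗ₖ (1 : Matrix (Fin N) (Fin N) ℂ)))

/-- `C₊ = I₂ ⊗ I₂ ⊗ (|1⟩⟨1| ⊗ S⁺ + |0⟩⟨0| ⊗ I_N)` on `del, ℓ₁, ℓ₀, j`. -/
def Cplus3 (N : ℕ) [NeZero N] :
    Matrix (Fin 2 × Fin 2 × Fin 2 × Fin N) (Fin 2 × Fin 2 × Fin 2 × Fin N) ℂ :=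
  (1 : Matrix (Fin 2) (Fin 2) ℂ) ⊗ₖ ((1 : Matrix (Fin 2) (Fin 2) ℂ) ⊗ₖ
    (P1 ⊗ₖ Sp N + P0 ⊗ₖ (1 : Matrix (Fin N) (Fin N) ℂ)))

/-- `B₀ = F(|0⟩⟨0| ⊗ |0⟩⟨0| ⊗ e₀e₀ᵀ)`. -/
def B00 (N : ℕ) [NeZero N] :
    Matrix (Fin 2 × Fin 2 × Fin 2 × Fin N) (Fin 2 × Fin 2 × Fin 2 × Fin N) ℂ :=
  Fctrl (P0 ⊗ₖ (P0 ⊗ₖ Matrix.single (0 : Fin N) (0 : Fin N) (1 : ℂ)))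

/-- `B₂ = F(|0⟩⟨0| ⊗ |1⟩⟨1| ⊗ e₀e₀ᵀ)`. -/
def B01 (N : ℕ) [NeZero N] :
    Matrix (Fin 2 × Fin 2 × Fin 2 × Fin N) (Fin 2 × Fin 2 × Fin 2 × Fin N) ℂ :=
  Fctrl (P0 ⊗ₖ (P1 ⊗ₖ Matrix.single (0 : Fin N) (0 : Fin N) (1 : ℂ)))

/-- `B_{N−1} = F(|1⟩⟨1| ⊗ |1⟩⟨1| ⊗ e_{N−1}e_{N−1}ᵀ)`. -/
def B11L (N : ℕ) [NeZero N] :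
    Matrix (Fin 2 × Fin 2 × Fin 2 × Fin N) (Fin 2 × Fin 2 × Fin 2 × Fin N) ℂ :=
  Fctrl (P1 ⊗ₖ (P1 ⊗ₖ Matrix.single (fLast N) (fLast N) (1 : ℂ)))

/-- `B₄ = F(|0⟩⟨0| ⊗ |1⟩⟨1| ⊗ e_{N−1}e_{N−1}ᵀ)`. -/
def B01L (N : ℕ) [NeZero N] :
    Matrix (Fin 2 × Fin 2 × Fin 2 × Fin N) (Fin 2 × Fin 2 × Fin 2 × Fin N) ℂ :=
  Fctrl (P0 ⊗ₖ (P1 ⊗ₖ Matrix.single (fLast N) (fLast N) (1 : ℂ)))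

/-- `I₂ ⊗ A ⊗ A ⊗ I_N` for a single-qubit gate `A`. -/
def sandwich (N : ℕ) [NeZero N] (A : Matrix (Fin 2) (Fin 2) ℂ) :
    Matrix (Fin 2 × Fin 2 × Fin 2 × Fin N) (Fin 2 × Fin 2 × Fin 2 × Fin N) ℂ :=
  (1 : Matrix (Fin 2) (Fin 2) ℂ) ⊗ₖ (A ⊗ₖ (A ⊗ₖ (1 : Matrix (Fin N) (Fin N) ℂ)))

/-- `U_d = (I₂⊗H⊗H⊗I) · C₊ · C₋ · B_{N−1} · B₀ · (I₂⊗Z⊗Z⊗I) · (I₂⊗H⊗H⊗I)`. -/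
def Ud (N : ℕ) [NeZero N] :
    Matrix (Fin 2 × Fin 2 × Fin 2 × Fin N) (Fin 2 × Fin 2 × Fin 2 × Fin N) ℂ :=
  sandwich N Hgate * Cplus3 N * Cminus3 N * B11L N * B00 N * sandwich N Zgate * sandwich N Hgate

/-- `U_n = (I₂⊗H⊗H⊗I) · C₊ · C₋ · B₄ · B₃ · B₂ · B₁ · (I₂⊗Z⊗Z⊗I) · (I₂⊗H⊗H⊗I)`. -/
def Un (N : ℕ) [NeZero N] :
    Matrix (Fin 2 × Fin 2 × Fin 2 × Fin N) (Fin 2 × Fin 2 × Fin 2 × Fin N) ℂ :=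
  sandwich N Hgate * Cplus3 N * Cminus3 N * B01L N * B11L N * B01 N * B00 N *
    sandwich N Zgate * sandwich N Hgate

/-- The scaled 1D periodic Laplacian `L̃_p = (1/4)(S⁻ + S⁺ − 2 I)`. -/
def Lper (N : ℕ) [NeZero N] : Matrix (Fin N) (Fin N) ℂ :=
  (1 / 4 : ℂ) • (Sm N + Sp N - (2 : ℂ) • (1 : Matrix (Fin N) (Fin N) ℂ))

/-- The scaled 1D Dirichlet Laplacian. -/
def Ldir (N : ℕ) [NeZero N] : Matrix (Fin N) (Fin N) ℂ :=
  Lper N - (1 / 4 : ℂ) •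
    (Matrix.single (0 : Fin N) (fLast N) (1 : ℂ) +
     Matrix.single (fLast N) (0 : Fin N) (1 : ℂ))

/-!
Post-selecting the flag qubit `del` on `|0⟩` turns the two controlled flips into the projector
`1 - Q₁ - Q₀`: since `Q₁Q₀ = 0` we have `F(Q₁) F(Q₀) = F(Q₁ + Q₀)`, and the `|0⟩` block of `F(Q)`
is `1 - Q`. What is left between the Hadamard layers is block diagonal in `ℓ₁ ℓ₀`, with blocks
`S⁻(1 - e₀e₀ᵀ)`, `S⁺S⁻ = 1`, `1` and `S⁺(1 - e_{N-1}e_{N-1}ᵀ)`. Since `H|0⟩⟨0|ZH` and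
`H|1⟩⟨1|ZH` have corner entries `1/2` and `-1/2`, the `|00⟩` block is a quarter of
`S⁻ + S⁺ - 2` minus the wrap-around terms `S⁻e₀e₀ᵀ = e_{N-1}e₀ᵀ` and
`S⁺e_{N-1}e_{N-1}ᵀ = e₀e_{N-1}ᵀ`.
-/

section ZeroBlock

variable {R α : Type*}

/-- `(⟨0| ⊗ I) M (|0⟩ ⊗ I)` -/
def zeroBlock (M : Matrix (Fin 2 × α) (Fin 2 × α) R) : Matrix α α R :=
  M.submatrix (Prod.mk 0) (Prod.mk 0)

lemma zeroBlock_add [Add R] (M M' : Matrix (Fin 2 × α) (Fin 2 × α) R) :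
    zeroBlock (M + M') = zeroBlock M + zeroBlock M' := rfl

lemma zeroBlock_smul {S : Type*} [SMul S R] (c : S) (M : Matrix (Fin 2 × α) (Fin 2 × α) R) :
    zeroBlock (c • M) = c • zeroBlock M := rfl

lemma zeroBlock_kronecker [Mul R] (A : Matrix (Fin 2) (Fin 2) R) (B : Matrix α α R) :
    zeroBlock (A ⊗ₖ B) = A 0 0 • B := rfl

variable [Fintype α] [Semiring R]

lemma zeroBlock_one_kronecker_mul (A : Matrix α α R) (M : Matrix (Fin 2 × α) (Fin 2 × α) R) :
    zeroBlock ((1 ⊗ₖ A) * M) = A * zeroBlock M := by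
  ext i j
  simp [zeroBlock, mul_apply, Fintype.sum_prod_type, one_apply]

lemma zeroBlock_mul_one_kronecker (M : Matrix (Fin 2 × α) (Fin 2 × α) R) (A : Matrix α α R) :
    zeroBlock (M * (1 ⊗ₖ A)) = zeroBlock M * A := by
  ext i j
  simp [zeroBlock, mul_apply, Fintype.sum_prod_type, one_apply]

end ZeroBlock

lemma P0_add_P1 : P0 + P1 = 1 := by
  ext i j; fin_cases i <;> fin_cases j <;> simp [P0, P1]

lemma P0_mul_P0 : P0 * P0 = P0 := by
  ext i j; fin_cases i <;> fin_cases j <;> simp [P0, mul_apply]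

lemma P0_mul_P1 : P0 * P1 = 0 := by
  ext i j; fin_cases i <;> fin_cases j <;> simp [P0, P1, mul_apply]

lemma P1_mul_P0 : P1 * P0 = 0 := by
  ext i j; fin_cases i <;> fin_cases j <;> simp [P0, P1, mul_apply]

lemma P1_mul_P1 : P1 * P1 = P1 := by
  ext i j; fin_cases i <;> fin_cases j <;> simp [P1, mul_apply]

lemma P0_conjTranspose : P0ᴴ = P0 := by
  ext i j; fin_cases i <;> fin_cases j <;> simp [P0]

lemma P1_conjTranspose : P1ᴴ = P1 := by
  ext i j; fin_cases i <;> fin_cases j <;> simp [P1]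

lemma Xgate_conjTranspose : Xgateᴴ = Xgate := by
  ext i j; fin_cases i <;> fin_cases j <;> simp [Xgate]

lemma Xgate_mul_self : Xgate * Xgate = 1 := by
  ext i j; fin_cases i <;> fin_cases j <;> simp [Xgate, mul_apply]

lemma Zgate_mem_unitaryGroup : Zgate ∈ unitaryGroup (Fin 2) ℂ := by
  rw [mem_unitaryGroup_iff]
  ext i j; fin_cases i <;> fin_cases j <;> simp [Zgate, mul_apply]

lemma inv_ofReal_sqrt_two_mul_self :
    ((Real.sqrt 2 : ℂ))⁻¹ * ((Real.sqrt 2 : ℂ))⁻¹ = 2⁻¹ := by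
  rw [← mul_inv, ← Complex.ofReal_mul, Real.mul_self_sqrt zero_le_two, Complex.ofReal_ofNat]

lemma Hgate_mem_unitaryGroup : Hgate ∈ unitaryGroup (Fin 2) ℂ := by
  rw [mem_unitaryGroup_iff]
  ext i j; fin_cases i <;> fin_cases j <;>
    simp [Hgate, mul_apply, inv_ofReal_sqrt_two_mul_self] <;> norm_num

lemma Hgate_mul_P0_mul_Zgate_mul_Hgate_zero_zero :
    (Hgate * P0 * (Zgate * Hgate)) 0 0 = 1 / 2 := by
  simp [Hgate, P0, Zgate, mul_apply, inv_ofReal_sqrt_two_mul_self]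

lemma Hgate_mul_P1_mul_Zgate_mul_Hgate_zero_zero :
    (Hgate * P1 * (Zgate * Hgate)) 0 0 = -(1 / 2) := by
  simp [Hgate, P1, Zgate, mul_apply, inv_ofReal_sqrt_two_mul_self]

lemma Matrix.kronecker_sub {l m n p R : Type*} [NonUnitalNonAssocRing R] (A : Matrix l m R)
    (B C : Matrix n p R) : A ⊗ₖ (B - C) = A ⊗ₖ B - A ⊗ₖ C := by
  ext; simp [mul_sub]

section Controlled

variable {α : Type*}

def controlled (A B : Matrix α α ℂ) : Matrix (Fin 2 × α) (Fin 2 × α) ℂ :=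
  P0 ⊗ₖ A + P1 ⊗ₖ B

lemma controlled_add_controlled (A B C D : Matrix α α ℂ) :
    controlled A B + controlled C D = controlled (A + C) (B + D) := by
  simp only [controlled, kronecker_add]; abel

lemma controlled_sub_controlled (A B C D : Matrix α α ℂ) :
    controlled A B - controlled C D = controlled (A - C) (B - D) := by
  simp only [controlled, kronecker_sub]; abel

lemma one_kronecker_eq_controlled (A : Matrix α α ℂ) : 1 ⊗ₖ A = controlled A A := by
  rw [controlled, ← add_kronecker, P0_add_P1]

lemma P0_kronecker_eq_controlled (A : Matrix α α ℂ) : P0 ⊗ₖ A = controlled A 0 := by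
  rw [controlled, kronecker_zero, add_zero]

lemma P1_kronecker_eq_controlled (A : Matrix α α ℂ) : P1 ⊗ₖ A = controlled 0 A := by
  rw [controlled, kronecker_zero, zero_add]

lemma controlled_conjTranspose (A B : Matrix α α ℂ) :
    (controlled A B)ᴴ = controlled Aᴴ Bᴴ := by
  simp only [controlled, conjTranspose_add, conjTranspose_kronecker, P0_conjTranspose,
    P1_conjTranspose]

lemma controlled_one_one [DecidableEq α] : controlled (1 : Matrix α α ℂ) 1 = 1 := by
  rw [← one_kronecker_eq_controlled, one_kronecker_one]

variable [Fintype α]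

lemma controlled_mul_controlled (A B C D : Matrix α α ℂ) :
    controlled A B * controlled C D = controlled (A * C) (B * D) := by
  simp only [controlled, add_mul, mul_add, ← mul_kronecker_mul, P0_mul_P0, P0_mul_P1, P1_mul_P0,
    P1_mul_P1, zero_kronecker, add_zero, zero_add]

lemma controlled_mem_unitaryGroup [DecidableEq α] {A B : Matrix α α ℂ}
    (hA : A ∈ unitaryGroup α ℂ) (hB : B ∈ unitaryGroup α ℂ) :
    controlled A B ∈ unitaryGroup (Fin 2 × α) ℂ := by
  rw [mem_unitaryGroup_iff, star_eq_conjTranspose] at hA hB ⊢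
  rw [controlled_conjTranspose, controlled_mul_controlled, hA, hB, controlled_one_one]

lemma zeroBlock_hadamard_controlled_Zgate_hadamard (A B C X Y : Matrix α α ℂ) :
    zeroBlock ((Hgate ⊗ₖ A) * controlled X Y * ((Zgate ⊗ₖ B) * (Hgate ⊗ₖ C))) =
      (1 / 2 : ℂ) • (A * (X - Y) * (B * C)) := by
  simp only [controlled, mul_add, add_mul, ← mul_kronecker_mul, zeroBlock_add,
    zeroBlock_kronecker, Hgate_mul_P0_mul_Zgate_mul_Hgate_zero_zero,
    Hgate_mul_P1_mul_Zgate_mul_Hgate_zero_zero, mul_sub, sub_mul]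
  module

end Controlled

section ControlledFlip

variable {α : Type*} [Fintype α] [DecidableEq α]

lemma Fctrl_mul_Fctrl_of_mul_eq_zero {Q₁ Q₀ : Matrix α α ℂ} (h : Q₁ * Q₀ = 0) :
    Fctrl Q₁ * Fctrl Q₀ = Fctrl (Q₁ + Q₀) := by
  simp only [Fctrl, add_mul, mul_add, ← mul_kronecker_mul, Xgate_mul_self, one_mul, mul_one,
    mul_sub, sub_mul, h, sub_zero, kronecker_zero, kronecker_add, kronecker_sub]
  abel

lemma Fctrl_mem_unitaryGroup {Q : Matrix α α ℂ} (hQ : Qᴴ = Q) (hQQ : Q * Q = Q) :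
    Fctrl Q ∈ unitaryGroup (Fin 2 × α) ℂ := by
  have hF : (Fctrl Q)ᴴ = Fctrl Q := by
    simp only [Fctrl, conjTranspose_add, conjTranspose_kronecker, Xgate_conjTranspose, hQ,
      conjTranspose_sub, conjTranspose_one]
  rw [mem_unitaryGroup_iff, star_eq_conjTranspose, hF]
  simp only [Fctrl, add_mul, mul_add, ← mul_kronecker_mul, Xgate_mul_self, one_mul, mul_one,
    mul_sub, sub_mul, hQQ, sub_self, kronecker_zero, sub_zero, zero_add, add_zero,
    ← kronecker_add, add_sub_cancel, one_kronecker_one]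

lemma zeroBlock_Fctrl (Q : Matrix α α ℂ) : zeroBlock (Fctrl Q) = 1 - Q := by
  simp [Fctrl, zeroBlock_add, zeroBlock_kronecker, Xgate]

lemma Fctrl_kronecker_kronecker_single_mem_unitaryGroup {P : Matrix (Fin 2) (Fin 2) ℂ}
    (hP : Pᴴ = P) (hPP : P * P = P) (a : α) :
    Fctrl (P ⊗ₖ (P ⊗ₖ single a a (1 : ℂ))) ∈
      unitaryGroup (Fin 2 × Fin 2 × Fin 2 × α) ℂ := by
  refine Fctrl_mem_unitaryGroup ?_ ?_
  · simp only [conjTranspose_kronecker, hP, conjTranspose_single, star_one]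
  · simp only [← mul_kronecker_mul, hPP, single_mul_single_same, mul_one]

end ControlledFlip

section Shifts

variable {N : ℕ} [NeZero N]

lemma fLast_add_one : fLast N + 1 = 0 := by
  obtain ⟨m, rfl⟩ : ∃ m, N = m + 1 := Nat.exists_eq_succ_of_ne_zero (NeZero.ne N)
  exact Fin.last_add_one m

lemma fLast_eq_neg_one : fLast N = -1 :=
  eq_neg_of_add_eq_zero_left fLast_add_one

lemma Sm_conjTranspose : (Sm N)ᴴ = Sp N := by
  ext i j
  simp [Sm, Sp, conjTranspose_apply, eq_sub_iff_add_eq, eq_comm]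

lemma Sp_conjTranspose : (Sp N)ᴴ = Sm N := by
  rw [← Sm_conjTranspose, conjTranspose_conjTranspose]

lemma Sp_mul_Sm : Sp N * Sm N = 1 := by
  ext i j
  simp [Sp, Sm, mul_apply, one_apply]

lemma Sm_mul_Sp : Sm N * Sp N = 1 := by
  ext i j
  simp [Sp, Sm, mul_apply, one_apply]

lemma Sm_mem_unitaryGroup : Sm N ∈ unitaryGroup (Fin N) ℂ := by
  rw [mem_unitaryGroup_iff, star_eq_conjTranspose, Sm_conjTranspose, Sm_mul_Sp]

lemma Sp_mem_unitaryGroup : Sp N ∈ unitaryGroup (Fin N) ℂ := by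
  rw [mem_unitaryGroup_iff, star_eq_conjTranspose, Sp_conjTranspose, Sp_mul_Sm]

lemma Sm_mul_single_zero : Sm N * single 0 0 1 = single (fLast N) 0 1 := by
  ext i j
  by_cases hj : j = 0
  · subst hj; simp [Sm, single_apply, fLast_eq_neg_one, eq_comm]
  · simp [hj, Ne.symm hj]

lemma Sp_mul_single_fLast : Sp N * single (fLast N) (fLast N) 1 = single 0 (fLast N) 1 := by
  ext i j
  by_cases hj : j = fLast N
  · subst hj; simp [Sp, single_apply, fLast_add_one, eq_comm]
  · simp [hj, Ne.symm hj]

end Shifts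

section Circuit

variable (N : ℕ) [NeZero N]

lemma Cplus3_eq_one_kronecker_controlled :
    Cplus3 N = 1 ⊗ₖ controlled (controlled 1 (Sp N)) (controlled 1 (Sp N)) := by
  rw [Cplus3, ← one_kronecker_eq_controlled, controlled, add_comm (P0 ⊗ₖ _)]

lemma Cminus3_eq_one_kronecker_controlled :
    Cminus3 N = 1 ⊗ₖ controlled (controlled (Sm N) (Sm N)) 1 := by
  rw [Cminus3, one_kronecker_one, ← one_kronecker_eq_controlled]
  rfl

lemma sandwich_mem_unitaryGroup {A : Matrix (Fin 2) (Fin 2) ℂ}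
    (hA : A ∈ unitaryGroup (Fin 2) ℂ) :
    sandwich N A ∈ unitaryGroup (Fin 2 × Fin 2 × Fin 2 × Fin N) ℂ :=
  kronecker_mem_unitary (one_mem _)
    (kronecker_mem_unitary hA (kronecker_mem_unitary hA (one_mem _)))

lemma Cplus3_mem_unitaryGroup :
    Cplus3 N ∈ unitaryGroup (Fin 2 × Fin 2 × Fin 2 × Fin N) ℂ := by
  have hSp := controlled_mem_unitaryGroup (one_mem _) (Sp_mem_unitaryGroup (N := N))
  rw [Cplus3_eq_one_kronecker_controlled]
  exact kronecker_mem_unitary (one_mem _) (controlled_mem_unitaryGroup hSp hSp)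

lemma Cminus3_mem_unitaryGroup :
    Cminus3 N ∈ unitaryGroup (Fin 2 × Fin 2 × Fin 2 × Fin N) ℂ := by
  have hSm := controlled_mem_unitaryGroup Sm_mem_unitaryGroup (Sm_mem_unitaryGroup (N := N))
  rw [Cminus3_eq_one_kronecker_controlled]
  exact kronecker_mem_unitary (one_mem _) (controlled_mem_unitaryGroup hSm (one_mem _))

lemma Ud_mem_unitaryGroup : Ud N ∈ unitaryGroup (Fin 2 × Fin 2 × Fin 2 × Fin N) ℂ := by
  have hB11L : B11L N ∈ unitaryGroup (Fin 2 × Fin 2 × Fin 2 × Fin N) ℂ :=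
    Fctrl_kronecker_kronecker_single_mem_unitaryGroup P1_conjTranspose P1_mul_P1 _
  have hB00 : B00 N ∈ unitaryGroup (Fin 2 × Fin 2 × Fin 2 × Fin N) ℂ :=
    Fctrl_kronecker_kronecker_single_mem_unitaryGroup P0_conjTranspose P0_mul_P0 _
  have hH := sandwich_mem_unitaryGroup N Hgate_mem_unitaryGroup
  have hZ := sandwich_mem_unitaryGroup N Zgate_mem_unitaryGroup
  exact mul_mem (mul_mem (mul_mem (mul_mem (mul_mem (mul_mem hH (Cplus3_mem_unitaryGroup N))
    (Cminus3_mem_unitaryGroup N)) hB11L) hB00) hZ) hH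

lemma zeroBlock_B11L_mul_B00 : zeroBlock (B11L N * B00 N) =
    controlled (controlled (1 - single 0 0 1) 1)
      (controlled 1 (1 - single (fLast N) (fLast N) 1)) := by
  have horth : (P1 ⊗ₖ (P1 ⊗ₖ single (fLast N) (fLast N) (1 : ℂ))) *
      (P0 ⊗ₖ (P0 ⊗ₖ single 0 0 (1 : ℂ))) = 0 := by
    rw [← mul_kronecker_mul, P1_mul_P0, zero_kronecker]
  rw [B11L, B00, Fctrl_mul_Fctrl_of_mul_eq_zero horth, zeroBlock_Fctrl]
  simp only [P0_kronecker_eq_controlled, P1_kronecker_eq_controlled, controlled_add_controlled,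
    zero_add, add_zero, ← controlled_one_one, controlled_sub_controlled, sub_zero]

lemma zeroBlock_Ud : zeroBlock (Ud N) =
    (Hgate ⊗ₖ (Hgate ⊗ₖ 1)) *
      controlled (controlled (Sm N * (1 - single 0 0 1)) 1)
        (controlled 1 (Sp N * (1 - single (fLast N) (fLast N) 1))) *
      ((Zgate ⊗ₖ (Zgate ⊗ₖ 1)) * (Hgate ⊗ₖ (Hgate ⊗ₖ 1))) := by
  rw [Ud, sandwich, sandwich, zeroBlock_mul_one_kronecker, zeroBlock_mul_one_kronecker,
    Cplus3_eq_one_kronecker_controlled, Cminus3_eq_one_kronecker_controlled]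
  simp only [mul_assoc, zeroBlock_one_kronecker_mul, zeroBlock_B11L_mul_B00,
    controlled_mul_controlled, one_mul, mul_one, Sp_mul_Sm]

lemma zeroBlock_zeroBlock_zeroBlock_Ud : zeroBlock (zeroBlock (zeroBlock (Ud N))) = Ldir N := by
  rw [zeroBlock_Ud, zeroBlock_hadamard_controlled_Zgate_hadamard, zeroBlock_smul,
    controlled_sub_controlled, zeroBlock_hadamard_controlled_Zgate_hadamard]
  simp only [one_mul, mul_one, mul_sub, Sm_mul_single_zero, Sp_mul_single_fLast, Ldir, Lper]
  module

end Circuit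

theorem ud_block_encodes_dirichlet_laplacian_general (n : ℕ) :
    Ud (2 ^ n) ∈ Matrix.unitaryGroup (Fin 2 × Fin 2 × Fin 2 × Fin (2 ^ n)) ℂ ∧
    (Ud (2 ^ n)).submatrix
        (fun i : Fin (2 ^ n) => ((0 : Fin 2), (0 : Fin 2), (0 : Fin 2), i))
        (fun j : Fin (2 ^ n) => ((0 : Fin 2), (0 : Fin 2), (0 : Fin 2), j))
      = Ldir (2 ^ n) :=
  ⟨Ud_mem_unitaryGroup _, zeroBlock_zeroBlock_zeroBlock_Ud _⟩

/-- `U_d` is unitary and is an exact (1,3,0)-block encoding of the scaled 1D Dirichlet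
Laplacian: `(⟨0|⊗⟨0|⊗⟨0|⊗I) U_d (|0⟩⊗|0⟩⊗|0⟩⊗I) = L̃_d`. -/
theorem ud_block_encodes_dirichlet_laplacian (n : ℕ) (hn : 1 ≤ n) :
    Ud (2 ^ n) ∈ Matrix.unitaryGroup (Fin 2 × Fin 2 × Fin 2 × Fin (2 ^ n)) ℂ ∧
    (Ud (2 ^ n)).submatrix
        (fun i : Fin (2 ^ n) => ((0 : Fin 2), (0 : Fin 2), (0 : Fin 2), i))
        (fun j : Fin (2 ^ n) => ((0 : Fin 2), (0 : Fin 2), (0 : Fin 2), j))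
      = Ldir (2 ^ n) :=
  ud_block_encodes_dirichlet_laplacian_general n
end
end

section
/- Let M ≥ 1, m ≥ 0, D ≥ 1, and K = 2^{⌈log₂ D⌉} with standard basis f_1, …, f_K of ℂ^K. For d = 1, …, D let A_d be an M×M matrix and let V_d be a unitary on ℂ^{2^m} ⊗ ℂ^M that is a (1, m, 0)-block encoding of A_d. Let ω_1, …, ω_D ≥ 0 with Σ_{d=1}^D ω_d = 1, and let W be any K×K unitary with W f_1 = Σ_{d=1}^D √ω_d f_d. Define SEL = Σ_{d=1}^D f_d f_d^* ⊗ V_d + Σ_{d=D+1}^K f_d f_d^* ⊗ I_{2^m M}. Then U = (W^† ⊗ I_{2^m M}) · SEL · (W ⊗ I_{2^m M}) is unitary and satisfies (f_1^* ⊗ ⟨0|^{⊗m} ⊗ I_M) U (f_1 ⊗ |0⟩^{⊗m} ⊗ I_M) = Σ_{d=1}^D ω_d A_d; that is, U is an exact (1, m + log₂ K, 0)-block encoding of Σ_{d=1}^D ω_d A_d. -/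
open Matrix
open scoped Kronecker

noncomputable section

/-- The select operator
`SEL = Σ_{d<D} f_d f_d^* ⊗ V_d + Σ_{D ≤ d < K} f_d f_d^* ⊗ I`. -/
def SEL {K : ℕ} {β : Type*} [Fintype β] [DecidableEq β] (D : ℕ) (hDK : D ≤ K)
    (V : Fin D → Matrix β β ℂ) : Matrix (Fin K × β) (Fin K × β) ℂ :=
  (∑ d : Fin D,
      Matrix.single (Fin.castLE hDK d) (Fin.castLE hDK d) (1 : ℂ) ⊗ₖ V d) +
  ∑ k ∈ Finset.univ.filter fun k : Fin K => D ≤ (k : ℕ),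
      Matrix.single k k (1 : ℂ) ⊗ₖ (1 : Matrix β β ℂ)

/-- `U = (W† ⊗ I) · SEL · (W ⊗ I)`. -/
def lcuU {K : ℕ} {β : Type*} [Fintype β] [DecidableEq β] (D : ℕ) (hDK : D ≤ K)
    (V : Fin D → Matrix β β ℂ) (W : Matrix (Fin K) (Fin K) ℂ) :
    Matrix (Fin K × β) (Fin K × β) ℂ :=
  (Wᴴ ⊗ₖ (1 : Matrix β β ℂ)) * SEL D hDK V * (W ⊗ₖ (1 : Matrix β β ℂ))

/-!
`SEL` is block diagonal with unitary blocks `V_d` (and `I` in the padding blocks `d ≥ D`), so it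
is unitary, and so is its conjugate `U` by the unitary `W ⊗ I`. The `(0, 0)` corner of `U` is the
average `Σ_k |W_{k0}|² (SEL_k)_{00}` of the corners of the blocks, and `|W_{k0}|² = ω_k`, which
vanishes on the padding.
-/

theorem Fin.sum_castLE_of_eq_zero {R : Type*} [AddCommMonoid R] {D K : ℕ} (h : D ≤ K)
    {f : Fin K → R} (hf : ∀ k : Fin K, D ≤ k → f k = 0) :
    ∑ d : Fin D, f (Fin.castLE h d) = ∑ k, f k :=
  Fintype.sum_of_injective _ (Fin.castLE_injective h) _ _
    (fun k hk => hf k (by simpa [Fin.range_castLE] using hk)) fun _ => rfl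

theorem sum_single_kronecker_eq_submatrix_blockDiagonal {R ι β : Type*} [CommSemiring R]
    [Fintype ι] [DecidableEq ι] (B : ι → Matrix β β R) :
    ∑ k, single k k (1 : R) ⊗ₖ B k = (blockDiagonal B).submatrix Prod.swap Prod.swap := by
  ext ⟨k, x⟩ ⟨k', y⟩
  simp [Matrix.sum_apply, single_apply, blockDiagonal_apply, ite_and]

theorem blockDiagonal_mem_unitaryGroup {R m ι : Type*} [CommRing R] [StarRing R] [Fintype m]
    [DecidableEq m] [Fintype ι] [DecidableEq ι] {B : ι → Matrix m m R}
    (hB : ∀ k, B k ∈ unitaryGroup m R) : blockDiagonal B ∈ unitaryGroup (m × ι) R := by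
  rw [mem_unitaryGroup_iff', star_eq_conjTranspose, blockDiagonal_conjTranspose,
    ← blockDiagonal_mul]
  convert blockDiagonal_one
  exact mem_unitaryGroup_iff'.1 (hB _)

theorem submatrix_equiv_mem_unitaryGroup {R m n : Type*} [CommRing R] [StarRing R] [Fintype m]
    [DecidableEq m] [Fintype n] [DecidableEq n] {A : Matrix n n R} (hA : A ∈ unitaryGroup n R)
    (e : m ≃ n) : A.submatrix e e ∈ unitaryGroup m R := by
  rw [mem_unitaryGroup_iff', star_eq_conjTranspose, conjTranspose_submatrix,
    submatrix_mul_equiv, ← star_eq_conjTranspose, mem_unitaryGroup_iff'.1 hA, submatrix_one_equiv]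

section SEL

variable {K D : ℕ} {β : Type*} [Fintype β] [DecidableEq β]

def selBlock (V : Fin D → Matrix β β ℂ) (k : Fin K) : Matrix β β ℂ :=
  if h : (k : ℕ) < D then V ⟨k, h⟩ else 1

theorem selBlock_mem_unitaryGroup {V : Fin D → Matrix β β ℂ}
    (hV : ∀ d, V d ∈ unitaryGroup β ℂ) (k : Fin K) : selBlock V k ∈ unitaryGroup β ℂ := by
  unfold selBlock
  split_ifs
  exacts [hV _, one_mem _]

theorem SEL_eq_sum (hDK : D ≤ K) (V : Fin D → Matrix β β ℂ) :
    SEL D hDK V = ∑ k, single k k 1 ⊗ₖ selBlock V k := by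
  rw [SEL, ← Finset.sum_filter_add_sum_filter_not Finset.univ (fun k : Fin K => (k : ℕ) < D)]
  congr 1
  · rw [Finset.sum_filter, ← Fin.sum_castLE_of_eq_zero hDK fun k hk => if_neg hk.not_gt]
    simp [selBlock]
  · refine Finset.sum_congr (by ext; simp) fun k hk => ?_
    simp only [Finset.mem_filter, Finset.mem_univ, true_and] at hk
    simp [selBlock, hk]

theorem SEL_mem_unitaryGroup (hDK : D ≤ K) {V : Fin D → Matrix β β ℂ}
    (hV : ∀ d, V d ∈ unitaryGroup β ℂ) : SEL D hDK V ∈ unitaryGroup (Fin K × β) ℂ := by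
  rw [SEL_eq_sum, sum_single_kronecker_eq_submatrix_blockDiagonal]
  exact submatrix_equiv_mem_unitaryGroup
    (blockDiagonal_mem_unitaryGroup (selBlock_mem_unitaryGroup hV)) (Equiv.prodComm _ _)

theorem lcuU_mem_unitaryGroup (hDK : D ≤ K) {V : Fin D → Matrix β β ℂ}
    (hV : ∀ d, V d ∈ unitaryGroup β ℂ) {W : Matrix (Fin K) (Fin K) ℂ}
    (hW : W ∈ unitaryGroup (Fin K) ℂ) : lcuU D hDK V W ∈ unitaryGroup (Fin K × β) ℂ := by
  have hWI : W ⊗ₖ (1 : Matrix β β ℂ) ∈ unitaryGroup (Fin K × β) ℂ :=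
    kronecker_mem_unitary hW (one_mem _)
  have hstar : Wᴴ ⊗ₖ (1 : Matrix β β ℂ) = star (W ⊗ₖ 1) := by
    rw [star_eq_conjTranspose, conjTranspose_kronecker, conjTranspose_one]
  rw [lcuU, hstar]
  exact mul_mem (mul_mem (Unitary.star_mem hWI) (SEL_mem_unitaryGroup hDK hV)) hWI

theorem lcuU_apply (hDK : D ≤ K) (V : Fin D → Matrix β β ℂ) (W : Matrix (Fin K) (Fin K) ℂ)
    (i j : Fin K) (x y : β) :
    lcuU D hDK V W (i, x) (j, y) = ∑ k, star (W k i) * W k j * selBlock V k x y := by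
  simp [lcuU, SEL_eq_sum, sum_single_kronecker_eq_submatrix_blockDiagonal, mul_apply,
    Fintype.sum_prod_type, blockDiagonal_apply, one_apply, mul_right_comm]

end SEL

theorem lcu_block_encoding_general (M : ℕ) (m : ℕ) (D : ℕ)
    (A : Fin D → Matrix (Fin M) (Fin M) ℂ)
    (V : Fin D → Matrix (Fin (2 ^ m) × Fin M) (Fin (2 ^ m) × Fin M) ℂ)
    (hVU : ∀ d, V d ∈ Matrix.unitaryGroup (Fin (2 ^ m) × Fin M) ℂ)
    (hVbe : ∀ d, (V d).submatrix (fun i : Fin M => ((0 : Fin (2 ^ m)), i))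
        (fun j : Fin M => ((0 : Fin (2 ^ m)), j)) = A d)
    (ω : Fin D → ℝ) (hω0 : ∀ d, 0 ≤ ω d)
    (W : Matrix (Fin (2 ^ Nat.clog 2 D)) (Fin (2 ^ Nat.clog 2 D)) ℂ)
    (hWU : W ∈ Matrix.unitaryGroup (Fin (2 ^ Nat.clog 2 D)) ℂ)
    (hW : W.mulVec (Pi.single (0 : Fin (2 ^ Nat.clog 2 D)) 1) = fun k : Fin (2 ^ Nat.clog 2 D) =>
      if hk : (k : ℕ) < D then ((Real.sqrt (ω ⟨k, hk⟩) : ℝ) : ℂ) else 0) :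
    lcuU D (Nat.le_pow_clog one_lt_two D) V W ∈
      Matrix.unitaryGroup (Fin (2 ^ Nat.clog 2 D) × Fin (2 ^ m) × Fin M) ℂ ∧
    (lcuU D (Nat.le_pow_clog one_lt_two D) V W).submatrix
        (fun i : Fin M => ((0 : Fin (2 ^ Nat.clog 2 D)), (0 : Fin (2 ^ m)), i))
        (fun j : Fin M => ((0 : Fin (2 ^ Nat.clog 2 D)), (0 : Fin (2 ^ m)), j))
      = ∑ d, ((ω d : ℂ) • A d) := by
  refine ⟨lcuU_mem_unitaryGroup _ hVU hWU, ?_⟩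
  have hW0 (k : Fin (2 ^ Nat.clog 2 D)) :
      W k 0 = if hk : (k : ℕ) < D then ((Real.sqrt (ω ⟨k, hk⟩) : ℝ) : ℂ) else 0 := by
    simpa [mulVec_single_one] using congrFun hW k
  ext i j
  rw [submatrix_apply, lcuU_apply, Matrix.sum_apply,
    ← Fin.sum_castLE_of_eq_zero (Nat.le_pow_clog one_lt_two D)]
  · refine Finset.sum_congr rfl fun d _ => ?_
    simp [hW0, selBlock, ← hVbe d, ← Complex.ofReal_mul, Real.mul_self_sqrt (hω0 d)]
  · intro k hk
    simp [hW0, hk.not_gt]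

/-- Linear combination of block encodings: given `(1, m, 0)`-block encodings `V_d` of `A_d`,
weights `ω_d ≥ 0` summing to one, and a unitary `W` with `W f₁ = Σ_d √ω_d f_d` on
`K = 2^{⌈log₂ D⌉}` dimensions, the unitary `U = (W† ⊗ I) · SEL · (W ⊗ I)` is an exact
`(1, m + log₂ K, 0)`-block encoding of `Σ_d ω_d A_d`. -/
theorem lcu_block_encoding (M : ℕ) (hM : 1 ≤ M) (m : ℕ) (D : ℕ) (hD : 1 ≤ D)
    (A : Fin D → Matrix (Fin M) (Fin M) ℂ)
    (V : Fin D → Matrix (Fin (2 ^ m) × Fin M) (Fin (2 ^ m) × Fin M) ℂ)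
    (hVU : ∀ d, V d ∈ Matrix.unitaryGroup (Fin (2 ^ m) × Fin M) ℂ)
    (hVbe : ∀ d, (V d).submatrix (fun i : Fin M => ((0 : Fin (2 ^ m)), i))
        (fun j : Fin M => ((0 : Fin (2 ^ m)), j)) = A d)
    (ω : Fin D → ℝ) (hω0 : ∀ d, 0 ≤ ω d) (hω1 : ∑ d, ω d = 1)
    (W : Matrix (Fin (2 ^ Nat.clog 2 D)) (Fin (2 ^ Nat.clog 2 D)) ℂ)
    (hWU : W ∈ Matrix.unitaryGroup (Fin (2 ^ Nat.clog 2 D)) ℂ)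
    (hW : W.mulVec (Pi.single (0 : Fin (2 ^ Nat.clog 2 D)) 1) = fun k : Fin (2 ^ Nat.clog 2 D) =>
      if hk : (k : ℕ) < D then ((Real.sqrt (ω ⟨k, hk⟩) : ℝ) : ℂ) else 0) :
    lcuU D (Nat.le_pow_clog one_lt_two D) V W ∈
      Matrix.unitaryGroup (Fin (2 ^ Nat.clog 2 D) × Fin (2 ^ m) × Fin M) ℂ ∧
    (lcuU D (Nat.le_pow_clog one_lt_two D) V W).submatrix
        (fun i : Fin M => ((0 : Fin (2 ^ Nat.clog 2 D)), (0 : Fin (2 ^ m)), i))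
        (fun j : Fin M => ((0 : Fin (2 ^ Nat.clog 2 D)), (0 : Fin (2 ^ m)), j))
      = ∑ d, ((ω d : ℂ) • A d) :=
  lcu_block_encoding_general M m D A V hVU hVbe ω hω0 W hWU hW
end
end

section
/- The unitary U_d satisfies (⟨0|⊗⟨0|⊗⟨0|⊗I_N) U_d (|0⟩⊗|0⟩⊗|0⟩⊗e_0) = (1/4)(−2 e_0 + e_1). -/
open Matrix
open scoped Kronecker

noncomputable section

/-- The standard basis vector `e_i` of `ℂ^N`. -/
def eVec (N : ℕ) (i : Fin N) : Fin N → ℂ := Pi.single i 1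

/-!
Follow the column `U_d (|000⟩ ⊗ e₀)` gate by gate, reading every gate as a substitution of
coordinates (`(S⁻ v)_j = v_{j+1}`, a controlled flip exchanges the two values of `del` on the
support of its projector). The Hadamards and `Z ⊗ Z` prepare
`½ Σ_{a,b} Z_{aa} Z_{bb} |0ab⟩ ⊗ e₀`.
`B₀` sends the `|00⟩` branch to `del = 1`, out of reach of the final projection, and `B_{N−1}`
acts trivially because `0 ≠ N − 1` once `N ≥ 2`. The shifts bring the `|01⟩` and `|10⟩` branches
back to `e₀` and move `|11⟩` to `e₁`, and `⟨00|(H ⊗ H)` weighs every branch with `½`, giving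
`¼ (−e₀ − e₀ + e₁)`.
-/

section KroneckerMulVec

variable {R l m n p : Type*} [Semiring R] [Fintype m] [Fintype p]

theorem kronecker_mulVec_apply (A : Matrix l m R) (B : Matrix n p R) (v : m × p → R)
    (i : l) (j : n) :
    (A ⊗ₖ B *ᵥ v) (i, j) = ∑ k, A i k * (B *ᵥ fun q => v (k, q)) j := by
  simp only [mulVec, dotProduct, kroneckerMap_apply, Fintype.sum_prod_type, Finset.mul_sum,
    mul_assoc]

theorem one_kronecker_mulVec_apply [DecidableEq m] (B : Matrix n p R) (v : m × p → R)
    (i : m) (j : n) :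
    ((1 : Matrix m m R) ⊗ₖ B *ᵥ v) (i, j) = (B *ᵥ fun q => v (i, q)) j := by
  simp [kronecker_mulVec_apply, one_apply]

theorem single_kronecker_mulVec_apply [DecidableEq m] (c : m) (B : Matrix n p R)
    (v : m × p → R) (i : m) (j : n) :
    (single c c (1 : R) ⊗ₖ B *ᵥ v) (i, j) = if i = c then (B *ᵥ fun q => v (c, q)) j else 0 := by
  rw [kronecker_mulVec_apply]
  split_ifs with h
  · subst h; simp [single_apply]
  · simp [Ne.symm h]

end KroneckerMulVec

theorem Sm_mulVec_apply (N : ℕ) [NeZero N] (v : Fin N → ℂ) (j : Fin N) :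
    (Sm N *ᵥ v) j = v (j + 1) := by
  simp [Sm, mulVec, dotProduct, eq_sub_iff_add_eq, eq_comm]

theorem Sp_mulVec_apply (N : ℕ) [NeZero N] (v : Fin N → ℂ) (j : Fin N) :
    (Sp N *ᵥ v) j = v (j - 1) := by
  simp [Sp, mulVec, dotProduct, ← sub_eq_iff_eq_add, eq_comm]

theorem P0_eq_single : P0 = single 0 0 1 := by
  ext i j; fin_cases i <;> fin_cases j <;> rfl

theorem P1_eq_single : P1 = single 1 1 1 := by
  ext i j; fin_cases i <;> fin_cases j <;> rfl

theorem Cminus3_mulVec_apply (N : ℕ) [NeZero N] (v : Fin 2 × Fin 2 × Fin 2 × Fin N → ℂ)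
    (d a b : Fin 2) (j : Fin N) :
    (Cminus3 N *ᵥ v) (d, a, b, j) = v (d, a, b, if a = 0 then j + 1 else j) := by
  fin_cases a <;>
    simp [Cminus3, add_mulVec, P0_eq_single, P1_eq_single, one_kronecker_mulVec_apply,
      single_kronecker_mulVec_apply, Sm_mulVec_apply]

theorem Cplus3_mulVec_apply (N : ℕ) [NeZero N] (v : Fin 2 × Fin 2 × Fin 2 × Fin N → ℂ)
    (d a b : Fin 2) (j : Fin N) :
    (Cplus3 N *ᵥ v) (d, a, b, j) = v (d, a, b, if b = 1 then j - 1 else j) := by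
  fin_cases b <;>
    simp [Cplus3, add_mulVec, P0_eq_single, P1_eq_single, one_kronecker_mulVec_apply,
      single_kronecker_mulVec_apply, Sp_mulVec_apply]

theorem Fctrl_single_mulVec_apply {α : Type*} [DecidableEq α] [Fintype α] (k : α)
    (v : Fin 2 × α → ℂ) (d : Fin 2) (x : α) :
    (Fctrl (single k k 1) *ᵥ v) (d, x) = v (if x = k then d + 1 else d, x) := by
  fin_cases d <;> by_cases hx : x = k <;>
    simp [Fctrl, add_mulVec, sub_mulVec, kronecker_mulVec_apply, single_mulVec, Xgate, hx]

theorem sandwich_mulVec_apply (N : ℕ) [NeZero N] (A : Matrix (Fin 2) (Fin 2) ℂ)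
    (v : Fin 2 × Fin 2 × Fin 2 × Fin N → ℂ) (d a b : Fin 2) (j : Fin N) :
    (sandwich N A *ᵥ v) (d, a, b, j) = ∑ a', ∑ b', A a a' * A b b' * v (d, a', b', j) := by
  rw [sandwich, one_kronecker_mulVec_apply]
  simp only [kronecker_mulVec_apply, one_mulVec, Finset.mul_sum, mul_assoc]

theorem B00_eq_Fctrl_single (N : ℕ) [NeZero N] :
    B00 N = Fctrl (single (0, 0, (0 : Fin N)) (0, 0, 0) 1) := by
  simp [B00, P0_eq_single, single_kronecker_single]

theorem B11L_eq_Fctrl_single (N : ℕ) [NeZero N] :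
    B11L N = Fctrl (single (1, 1, fLast N) (1, 1, fLast N) 1) := by
  simp [B11L, P1_eq_single, single_kronecker_single]

theorem ofReal_sqrt_two_inv_mul_self :
    ((Real.sqrt 2 : ℝ) : ℂ)⁻¹ * ((Real.sqrt 2 : ℝ) : ℂ)⁻¹ = 1 / 2 := by
  rw [← mul_inv, ← Complex.ofReal_mul, Real.mul_self_sqrt zero_le_two]
  norm_num

theorem Hgate_apply_zero_mul (a b : Fin 2) : Hgate a 0 * Hgate b 0 = 1 / 2 := by
  fin_cases a <;> fin_cases b <;> simp [Hgate, ofReal_sqrt_two_inv_mul_self]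

theorem Hgate_zero_apply_mul (a b : Fin 2) : Hgate 0 a * Hgate 0 b = 1 / 2 := by
  fin_cases a <;> fin_cases b <;> simp [Hgate, ofReal_sqrt_two_inv_mul_self]

theorem sandwich_Zgate_Hgate_mulVec_single (N : ℕ) [NeZero N] :
    sandwich N Zgate *ᵥ (sandwich N Hgate *ᵥ Pi.single (0, 0, 0, 0) 1) = fun x =>
      if x.1 = 0 ∧ x.2.2.2 = 0 then Zgate x.2.1 x.2.1 * Zgate x.2.2.1 x.2.2.1 / 2 else 0 := by
  funext ⟨d, a, b, j⟩
  simp only [sandwich_mulVec_apply]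
  fin_cases a <;> fin_cases b <;> by_cases hd : d = 0 <;> by_cases hj : j = 0 <;>
    simp [Fin.sum_univ_two, Pi.single_apply, Hgate_apply_zero_mul, Zgate, hd, hj, neg_div]

theorem Ud_mulVec (N : ℕ) [NeZero N] (v : Fin 2 × Fin 2 × Fin 2 × Fin N → ℂ) :
    Ud N *ᵥ v = sandwich N Hgate *ᵥ (Cplus3 N *ᵥ (Cminus3 N *ᵥ (B11L N *ᵥ (B00 N *ᵥ
      (sandwich N Zgate *ᵥ (sandwich N Hgate *ᵥ v)))))) := by
  simp only [Ud, mulVec_mulVec, Matrix.mul_assoc]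

theorem Ud_apply_zero (N : ℕ) [NeZero N] (hN : 1 < N) (i : Fin N) :
    Ud N (0, 0, 0, i) (0, 0, 0, 0) =
      (1 / 4 : ℂ) * (-2 * eVec N 0 i + eVec N 1 i) := by
  have hcol : Ud N (0, 0, 0, i) (0, 0, 0, 0) = (Ud N *ᵥ Pi.single (0, 0, 0, 0) 1) (0, 0, 0, i) := by
    rw [mulVec_single_one]; rfl
  rw [hcol, Ud_mulVec, sandwich_Zgate_Hgate_mulVec_single]
  simp only [sandwich_mulVec_apply, Cplus3_mulVec_apply, Cminus3_mulVec_apply,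
    B11L_eq_Fctrl_single, B00_eq_Fctrl_single, Fctrl_single_mulVec_apply, Hgate_zero_apply_mul,
    Fin.sum_univ_two]
  have hlast : (0 : Fin N) ≠ fLast N := by
    simp [Fin.ext_iff, fLast]; omega
  have hN1 : N ≠ 1 := by omega
  by_cases h0 : i = 0
  · simp [eVec, Zgate, h0, hN1]; norm_num
  by_cases h1 : i = 1
  · simp [eVec, Zgate, h1, hlast, hN1]; norm_num
  · simp [eVec, h0, h1, sub_eq_zero]

/-- `(⟨0|⊗⟨0|⊗⟨0|⊗I) U_d (|0⟩⊗|0⟩⊗|0⟩⊗e_0) = (1/4)(−2e_0 + e_1)`. -/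
theorem ud_left_boundary_action (n : ℕ) (hn : 1 ≤ n) :
    (fun i : Fin (2 ^ n) =>
        Ud (2 ^ n) ((0 : Fin 2), (0 : Fin 2), (0 : Fin 2), i)
          ((0 : Fin 2), (0 : Fin 2), (0 : Fin 2), (0 : Fin (2 ^ n))))
      = (1 / 4 : ℂ) •
          (-(2 : ℂ) • eVec (2 ^ n) 0
            + eVec (2 ^ n)
                ⟨1, (by have := Nat.one_lt_two_pow_iff.mpr (by omega : n ≠ 0); omega)⟩) := by
  have hN : 1 < 2 ^ n := Nat.one_lt_two_pow_iff.mpr (by omega)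
  have hone : (⟨1, hN⟩ : Fin (2 ^ n)) = 1 := Fin.ext (Nat.mod_eq_of_lt hN).symm
  rw [hone]
  funext i
  exact Ud_apply_zero _ hN i
end
end
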